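/- arXiv:math/0111137 — 2 statements merged into one kernel-verified Lean document; each statement's English description precedes it below -/
import Mathlib

section
/- Let α(t), β(t), γ(t) be smooth 1-parameter families of 1-forms on M with dα = α ∧ β and dβ = α ∧ γ for every t. Then the 4-form β̇ ∧ β ∧ dβ is closed for every t. -/
/-!
Since `dβ = α ∧ γ` is decomposable, `dβ ∧ dβ = 0` for every `t`; differentiating in `t` and using
that 2-forms commute gives `dβ̇ ∧ dβ = 0`. Then
`d(β̇ ∧ β ∧ dβ) = dβ̇ ∧ β ∧ dβ - β̇ ∧ dβ ∧ dβ = β ∧ (dβ̇ ∧ dβ) - β̇ ∧ (dβ ∧ dβ) = 0`.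
-/

/-- An abstract algebra of (differential) forms on a smooth manifold `M`: a normed
`ℝ`-algebra `Ω` (the algebra of smooth differential forms, normed so that one can
speak of smooth/differentiable one-parameter families), equipped with a grading
predicate `IsDeg n a` ("`a` is a homogeneous form of degree `n`") and an exterior
differential `d`, a continuous linear map satisfying the graded Leibniz rule,
graded commutativity and `d ∘ d = 0`. -/
class FormAlgebra (Ω : Type*) [NormedRing Ω] [NormedAlgebra ℝ Ω] where
  /-- `IsDeg n a` means that `a` is a homogeneous form of degree `n`. -/
  IsDeg : ℕ → Ω → Prop
  /-- The exterior differential. -/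
  d : Ω →L[ℝ] Ω
  isDeg_d : ∀ {n : ℕ} {a : Ω}, IsDeg n a → IsDeg (n + 1) (d a)
  isDeg_mul : ∀ {m n : ℕ} {a b : Ω}, IsDeg m a → IsDeg n b → IsDeg (m + n) (a * b)
  d_mul : ∀ {m : ℕ} (a b : Ω), IsDeg m a →
    d (a * b) = d a * b + (-1 : ℝ) ^ m • (a * d b)
  deg_mul_comm : ∀ {m n : ℕ} (a b : Ω), IsDeg m a → IsDeg n b →
    a * b = (-1 : ℝ) ^ (m * n) • (b * a)
  d_d : ∀ a : Ω, d (d a) = 0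

open FormAlgebra

namespace FormAlgebra

variable {Ω : Type*} [NormedRing Ω] [NormedAlgebra ℝ Ω]

instance : IsAddTorsionFree Ω := .of_isTorsionFree ℝ Ω

variable [FormAlgebra Ω]

theorem mul_comm_of_even {m n : ℕ} {a b : Ω} (ha : IsDeg m a) (hb : IsDeg n b)
    (hmn : Even (m * n)) : a * b = b * a := by
  rw [deg_mul_comm a b ha hb, hmn.neg_one_pow, one_smul]

theorem mul_comm_of_odd {m n : ℕ} {a b : Ω} (ha : IsDeg m a) (hb : IsDeg n b)
    (hmn : Odd (m * n)) : a * b = -(b * a) := by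
  rw [deg_mul_comm a b ha hb, hmn.neg_one_pow, neg_one_smul]

theorem mul_self_eq_zero_of_odd {n : ℕ} {a : Ω} (ha : IsDeg n a) (hn : Odd n) : a * a = 0 :=
  self_eq_neg.mp (mul_comm_of_odd ha ha (hn.mul hn))

theorem mul_self_eq_zero_of_eq_mul {a c x : Ω} (ha : IsDeg 1 a) (hc : IsDeg 1 c)
    (hx : x = a * c) : x * x = 0 := by
  rw [hx, mul_assoc, mul_comm_of_even hc (isDeg_mul ha hc) (by decide), mul_assoc,
    mul_self_eq_zero_of_odd hc odd_one, mul_zero, mul_zero]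

theorem hasDerivAt_d {β : ℝ → Ω} {β' : Ω} {t : ℝ} (h : HasDerivAt β β' t) :
    HasDerivAt (fun s => d (β s)) (d β') t :=
  (d : Ω →L[ℝ] Ω).hasFDerivAt.comp_hasDerivAt t h

theorem d_deriv_mul_d_eq_zero {β : ℝ → Ω} {β' : Ω} {t : ℝ} (hβd : HasDerivAt β β' t)
    (hβ : IsDeg 1 (β t)) (hβ' : IsDeg 1 β') (hsq : ∀ s, d (β s) * d (β s) = 0) :
    d β' * d (β t) = 0 := by
  have hderiv : HasDerivAt (fun s => d (β s) * d (β s)) (d β' * d (β t) + d (β t) * d β') t :=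
    (hasDerivAt_d hβd).mul (hasDerivAt_d hβd)
  have hsum : d β' * d (β t) + d (β t) * d β' = 0 :=
    hderiv.unique (by simpa only [hsq] using hasDerivAt_const t (0 : Ω))
  rw [mul_comm_of_even (isDeg_d hβ) (isDeg_d hβ') (by decide)] at hsum
  exact self_eq_neg.mp (eq_neg_of_add_eq_zero_left hsum)

theorem d_mul_mul_d_eq_zero {b b' : Ω} (hb : IsDeg 1 b) (hb' : IsDeg 1 b')
    (hcross : d b' * d b = 0) (hsq : d b * d b = 0) : d (b' * b * d b) = 0 :=
  calc d (b' * b * d b)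
      = (d b' * b - b' * d b) * d b := by
        rw [d_mul _ _ (isDeg_mul hb' hb), d_d, d_mul _ _ hb']
        simp [sub_eq_add_neg]
    _ = b * (d b' * d b) - b' * (d b * d b) := by
        rw [mul_comm_of_even (isDeg_d hb') hb (by decide), sub_mul, mul_assoc, mul_assoc]
    _ = 0 := by rw [hcross, hsq, mul_zero, mul_zero, sub_zero]

end FormAlgebra

theorem statement5_general {Ω : Type*} [NormedRing Ω] [NormedAlgebra ℝ Ω] [FormAlgebra Ω]
    (α β γ β' : ℝ → Ω)
    (hβd : ∀ t, HasDerivAt β (β' t) t)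
    (hα : ∀ t, IsDeg 1 (α t)) (hβ : ∀ t, IsDeg 1 (β t)) (hγ : ∀ t, IsDeg 1 (γ t))
    (hβ' : ∀ t, IsDeg 1 (β' t))
    (heq2 : ∀ t, d (β t) = α t * γ t) :
    ∀ t, d (β' t * β t * d (β t)) = 0 := by
  intro t
  have hsq : ∀ s, d (β s) * d (β s) = 0 := fun s =>
    mul_self_eq_zero_of_eq_mul (hα s) (hγ s) (heq2 s)
  exact d_mul_mul_d_eq_zero (hβ t) (hβ' t) (d_deriv_mul_d_eq_zero (hβd t) (hβ t) (hβ' t) hsq)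
    (hsq t)

/-- Let `α(t), β(t), γ(t)` be smooth 1-parameter families of 1-forms on `M` with
`dα = α ∧ β` and `dβ = α ∧ γ` for every `t`.  Then the 4-form `β̇ ∧ β ∧ dβ` is
closed for every `t`. -/
theorem statement5 {Ω : Type*} [NormedRing Ω] [NormedAlgebra ℝ Ω] [FormAlgebra Ω]
    (α β γ α' β' γ' : ℝ → Ω)
    (hαd : ∀ t, HasDerivAt α (α' t) t)
    (hβd : ∀ t, HasDerivAt β (β' t) t)
    (hγd : ∀ t, HasDerivAt γ (γ' t) t)
    (hα : ∀ t, IsDeg 1 (α t)) (hβ : ∀ t, IsDeg 1 (β t)) (hγ : ∀ t, IsDeg 1 (γ t))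
    (hα' : ∀ t, IsDeg 1 (α' t)) (hβ' : ∀ t, IsDeg 1 (β' t)) (hγ' : ∀ t, IsDeg 1 (γ' t))
    (heq1 : ∀ t, d (α t) = α t * β t)
    (heq2 : ∀ t, d (β t) = α t * γ t) :
    ∀ t, d (β' t * β t * d (β t)) = 0 :=
  statement5_general α β γ β' hβd hα hβ hγ hβ' heq2
end

section
/- Let α(t), β(t), γ(t) be smooth families of 1-forms with dα = α ∧ β, dβ = α ∧ γ, and suppose α̇ = L_X α for a smooth (possibly time-dependent) vector field X on M. Then β̇ ∧ β ∧ dβ = d(β(X) · β ∧ dβ), so the form β̇ ∧ β ∧ dβ is exact. -/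
open FormAlgebra

/-- Two forms of degree one anticommute. -/
lemma FormAlgebra.one_anticomm {Ω : Type*} [NormedRing Ω] [NormedAlgebra ℝ Ω] [FormAlgebra Ω]
    {x y : Ω} (hx : IsDeg 1 x) (hy : IsDeg 1 y) : x * y = -(y * x) := by
  have h := deg_mul_comm x y hx hy
  simpa [pow_one] using h

/-- The square of a degree-one form is zero. -/
lemma FormAlgebra.one_sq_zero {Ω : Type*} [NormedRing Ω] [NormedAlgebra ℝ Ω] [FormAlgebra Ω]
    {x : Ω} (hx : IsDeg 1 x) : x * x = 0 := by
  have h := FormAlgebra.one_anticomm hx hx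
  have h2 : (2 : ℝ) • (x * x) = 0 := by
    rw [two_smul]
    nth_rewrite 1 [h]
    exact neg_add_cancel _
  have := smul_eq_zero.mp h2
  simpa using this

/-- A degree-zero form commutes with a degree-one form. -/
lemma FormAlgebra.zero_comm {Ω : Type*} [NormedRing Ω] [NormedAlgebra ℝ Ω] [FormAlgebra Ω]
    {x y : Ω} (hx : IsDeg 1 x) (hy : IsDeg 0 y) : x * y = y * x := by
  have h := deg_mul_comm x y hx hy
  simpa using h

/-- Let `α(t), β(t), γ(t)` be smooth families of 1-forms with `dα = α ∧ β`,
`dβ = α ∧ γ`, and suppose `α̇ = L_X α` for a smooth (possibly time-dependent)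
vector field `X` on `M`.  Here contraction with `X` at time `t` is modelled by
the linear map `ι t`, which is an antiderivation lowering degree by one, and the
Lie derivative is given by Cartan's formula `L_X = d ∘ i_X + i_X ∘ d`.  Then
`β̇ ∧ β ∧ dβ = d(β(X) · β ∧ dβ)`, so the form `β̇ ∧ β ∧ dβ` is exact. -/
theorem statement11 {Ω : Type*} [NormedRing Ω] [NormedAlgebra ℝ Ω] [FormAlgebra Ω]
    (α β γ α' β' γ' : ℝ → Ω) (ι : ℝ → Ω →ₗ[ℝ] Ω)
    (hαd : ∀ t, HasDerivAt α (α' t) t)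
    (hβd : ∀ t, HasDerivAt β (β' t) t)
    (hγd : ∀ t, HasDerivAt γ (γ' t) t)
    (hα : ∀ t, IsDeg 1 (α t)) (hβ : ∀ t, IsDeg 1 (β t)) (hγ : ∀ t, IsDeg 1 (γ t))
    (hα' : ∀ t, IsDeg 1 (α' t)) (hβ' : ∀ t, IsDeg 1 (β' t)) (hγ' : ∀ t, IsDeg 1 (γ' t))
    (heq1 : ∀ t, d (α t) = α t * β t)
    (heq2 : ∀ t, d (β t) = α t * γ t)
    (hιmul : ∀ t (m : ℕ) (a b : Ω), IsDeg m a →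
      ι t (a * b) = ι t a * b + (-1 : ℝ) ^ m • (a * ι t b))
    (hιdeg : ∀ t (n : ℕ) (a : Ω), IsDeg (n + 1) a → IsDeg n (ι t a))
    (hι0 : ∀ t (a : Ω), IsDeg 0 a → ι t a = 0)
    (hLie : ∀ t, α' t = d (ι t (α t)) + ι t (d (α t))) :
    ∀ t, β' t * β t * d (β t) = d (ι t (β t) * (β t * d (β t))) := by
  intro t
  -- the derivative of `d α = α * β`
  have hD : HasDerivAt (fun s => d (α s)) (d (α' t)) t := by
    have h := ((d : Ω →L[ℝ] Ω).hasFDerivAt (x := α t)).comp_hasDerivAt t (hαd t)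
    exact h
  have hfun : (fun s => d (α s)) = fun s => α s * β s := funext heq1
  rw [hfun] at hD
  have Deq : d (α' t) = α' t * β t + α t * β' t := hD.unique ((hαd t).mul (hβd t))
  -- abbreviations
  set a := α t with ha_def
  set b := β t with hb_def
  set c := γ t with hc_def
  set a' := α' t with ha'_def
  set b' := β' t with hb'_def
  set f := ι t (α t) with hf_def
  set g := ι t (β t) with hg_def
  have ha1 : IsDeg 1 a := hα t
  have hb1 : IsDeg 1 b := hβ t
  have hc1 : IsDeg 1 c := hγ t
  have ha'1 : IsDeg 1 a' := hα' t
  have hb'1 : IsDeg 1 b' := hβ' t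
  have hf0 : IsDeg 0 f := hιdeg t 0 a ha1
  have hg0 : IsDeg 0 g := hιdeg t 0 b hb1
  have hDg1 : IsDeg 1 (d g) := isDeg_d hg0
  -- anticommutation facts
  have hba : b * a = -(a * b) := one_anticomm hb1 ha1
  have hb'a : b' * a = -(a * b') := one_anticomm hb'1 ha1
  have hDga : d g * a = -(a * d g) := one_anticomm hDg1 ha1
  have hcb : c * b = -(b * c) := one_anticomm hc1 hb1
  have hbb : b * b = 0 := one_sq_zero hb1
  have hcc : c * c = 0 := one_sq_zero hc1
  have hgb : g * b = b * g := (zero_comm hb1 hg0).symm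
  -- Cartan's formula computed
  have hLie' : a' = d f + (f * b - a * g) := by
    have h := hLie t
    rw [heq1 t] at h
    rw [hιmul t 1 a b ha1] at h
    simpa [pow_one, neg_one_smul, sub_eq_add_neg] using h
  -- compute d a' from hLie'
  have hda' : d a' = (d f * b + f * (a * c)) - ((a * b) * g - a * d g) := by
    rw [hLie']
    rw [map_add, map_sub, d_d]
    rw [d_mul f b hf0, d_mul a g ha1]
    rw [heq1 t, heq2 t]
    simp [pow_zero, pow_one, one_smul, neg_one_smul, sub_eq_add_neg]
    rfl
  -- compute a' * b + a * b' from hLie'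
  have hab' : a' * b + a * b' = (d f * b - (a * b) * g) + a * b' := by
    rw [hLie']
    rw [add_mul, sub_mul, mul_assoc f b b, hbb, mul_zero, mul_assoc a g b, hgb,
      ← mul_assoc a b g]
    abel
  -- the key identity:  a * b' = f * (a * c) + a * d g
  have key : a * b' = f * (a * c) + a * d g := by
    have h := Deq
    rw [hda', hab'] at h
    have h2 : (d f * b + f * (a * c)) - ((a * b) * g - a * d g)
        - (d f * b - (a * b) * g) = a * b' := by rw [h]; abel
    rw [← h2]; abel
  -- compute the right-hand side
  have hDbDb : d b * d b = 0 := by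
    rw [heq2 t]
    calc (a * c) * (a * c) = a * (c * a) * c := by noncomm_ring
      _ = a * (-(a * c)) * c := by rw [one_anticomm hc1 ha1]
      _ = -((a * a) * (c * c)) := by noncomm_ring
      _ = 0 := by rw [one_sq_zero ha1]; simp
  have hRHS : d (g * (b * d b)) = d g * (b * (a * c)) := by
    rw [d_mul g (b * d b) hg0]
    rw [d_mul b (d b) hb1, d_d]
    simp only [pow_zero, pow_one, one_smul, neg_one_smul, mul_zero, neg_zero, add_zero]
    rw [hDbDb, heq2 t]
    simp
    rfl
  rw [hRHS, heq2 t]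
  -- now a purely algebraic computation
  calc b' * b * (a * c)
      = b' * (b * a) * c := by noncomm_ring
    _ = b' * (-(a * b)) * c := by rw [hba]
    _ = -(b' * a * (b * c)) := by noncomm_ring
    _ = -(-(a * b') * (b * c)) := by rw [hb'a]
    _ = a * b' * (b * c) := by noncomm_ring
    _ = (f * (a * c) + a * d g) * (b * c) := by rw [key]
    _ = f * (a * (c * b)) * c + a * d g * (b * c) := by noncomm_ring
    _ = f * (a * (-(b * c))) * c + a * d g * (b * c) := by rw [hcb]
    _ = -(f * (a * b) * (c * c)) + a * d g * (b * c) := by noncomm_ring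
    _ = a * d g * (b * c) := by rw [hcc]; simp
    _ = -(-(a * d g) * (b * c)) := by noncomm_ring
    _ = -(d g * a * (b * c)) := by rw [hDga]
    _ = d g * (-(a * b)) * c := by noncomm_ring
    _ = d g * (b * a) * c := by rw [← hba]
    _ = d g * (b * (a * c)) := by noncomm_ring
end
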